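/- arXiv:2111.00685 — 2 statements merged into one kernel-verified Lean document; each statement's English description precedes it below -/
import Mathlib

section
/- Let X be a connected graph (with the graph metric) and suppose there is a constant B > 0 such that for every pair of vertices w, w' there exists an edge path γ(w,w') from w to w' with the property that every path from w to w' intersects the ball of radius B around each vertex of γ(w,w'). Then for any geodesic α from w to w' with midpoint m, every path from w to w' passes within distance 3B + 1 of m. -/
/-!
Every vertex of `γ(w, w')` lies within `B` of the geodesic `α` (apply the hypothesis to `α`
itself). Projecting the vertices of `γ` to nearby vertices of `α` gives positions along `α` that
start within `B` of `w`, end within `B` of `w'` and, because `α` is geodesic, advance by at most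
`2B + 1` per step. Such a sequence lands within `B` of the midpoint, so some vertex of `γ` is
within `2B` of the midpoint, and every path from `w` to `w'` comes within `B` of that vertex.
-/

namespace Nat

theorem exists_near_of_succ_le_add (f : ℕ → ℕ) {n M t : ℕ} (h0 : f 0 ≤ M) (hn : M ≤ f n)
    (hstep : ∀ i < n, f (i + 1) ≤ f i + (2 * t + 1)) :
    ∃ j ≤ n, f j ≤ M + t ∧ M ≤ f j + t := by
  classical
  have hex : ∃ i, M ≤ f i := ⟨n, hn⟩
  have hle : Nat.find hex ≤ n := Nat.find_min' hex hn
  have hcross : M ≤ f (Nat.find hex) := Nat.find_spec hex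
  rcases hfind : Nat.find hex with _ | k <;> rw [hfind] at hcross hle
  · exact ⟨0, Nat.zero_le _, by omega, by omega⟩
  · have hbelow : f k < M := not_le.mp (Nat.find_min hex (by omega))
    have hjump := hstep k (by omega)
    by_cases hnear : f (k + 1) ≤ M + t
    · exact ⟨k + 1, hle, hnear, by omega⟩
    · exact ⟨k, by omega, by omega, by omega⟩

end Nat

namespace SimpleGraph.Walk

variable {V : Type*} {G : SimpleGraph V} {u v : V}

theorem dist_getVert_le_sub (p : G.Walk u v) {i j : ℕ} (hij : i ≤ j) :
    G.dist (p.getVert i) (p.getVert j) ≤ j - i :=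
  calc G.dist (p.getVert i) (p.getVert j)
      = G.dist (p.getVert i) ((p.drop i).getVert (j - i)) := by
        rw [drop_getVert, Nat.add_sub_cancel' hij]
    _ ≤ ((p.drop i).take (j - i)).length := dist_le _
    _ ≤ j - i := by simp

theorem le_add_dist_getVert_of_length_eq_dist (p : G.Walk u v) (hp : p.length = G.dist u v)
    (i : ℕ) {j : ℕ} (hj : j ≤ p.length) : j ≤ i + G.dist (p.getVert i) (p.getVert j) := by
  have hstart : G.dist u (p.getVert i) ≤ i := by
    simpa using p.dist_getVert_le_sub (Nat.zero_le i)
  have hend : G.dist (p.getVert j) v ≤ p.length - j := by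
    simpa using p.dist_getVert_le_sub hj
  have htri₁ := (p.take i).reachable.dist_triangle_left v
  have htri₂ := ((p.take i).reachable.symm.trans (p.take j).reachable).dist_triangle_left v
  omega

theorem dist_getVert_le_of_le_add (p : G.Walk u v) {i j t : ℕ} (hij : i ≤ j + t)
    (hji : j ≤ i + t) : G.dist (p.getVert i) (p.getVert j) ≤ t := by
  rcases le_total i j with hle | hle
  · exact (p.dist_getVert_le_sub hle).trans (by omega)
  · rw [dist_comm]
    exact (p.dist_getVert_le_sub hle).trans (by omega)

theorem exists_mem_support_dist_getVert_le_two_mul {α γ : G.Walk u v}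
    (hα : α.length = G.dist u v) {B : ℕ} (hγ : ∀ x ∈ γ.support, ∃ y ∈ α.support, G.dist y x ≤ B)
    {M : ℕ} (hBM : B ≤ M) (hMB : M + B ≤ α.length) :
    ∃ x ∈ γ.support, G.dist x (α.getVert M) ≤ 2 * B := by
  have hproj : ∀ i, ∃ k ≤ α.length, G.dist (α.getVert k) (γ.getVert i) ≤ B := by
    intro i
    obtain ⟨y, hy, hyx⟩ := hγ _ (γ.getVert_mem_support i)
    obtain ⟨k, rfl, hk⟩ := mem_support_iff_exists_getVert.mp hy
    exact ⟨k, hk, hyx⟩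
  choose f hfα hf using hproj
  have hreach (k i : ℕ) : G.Reachable (α.getVert k) (γ.getVert i) :=
    (α.take k).reachable.symm.trans (γ.take i).reachable
  have hstep : ∀ i < γ.length, f (i + 1) ≤ f i + (2 * B + 1) := by
    intro i hi
    have hgeod := α.le_add_dist_getVert_of_length_eq_dist hα (f i) (hfα (i + 1))
    have hadj := dist_eq_one_iff_adj.mpr (γ.adj_getVert_succ hi)
    have htri₁ := (hreach (f i) i).dist_triangle_left (α.getVert (f (i + 1)))
    have htri₂ := (hreach (f i) i).symm.trans (hreach (f i) (i + 1)) |>.dist_triangle_left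
      (α.getVert (f (i + 1)))
    have hfi := hf i
    have hfi₁ := hf (i + 1)
    rw [dist_comm] at hfi₁
    omega
  have h0 : f 0 ≤ M := by
    have hgeod := α.le_add_dist_getVert_of_length_eq_dist hα 0 (hfα 0)
    have hf0 := hf 0
    rw [getVert_zero, dist_comm] at hgeod
    rw [getVert_zero] at hf0
    omega
  have hn : M ≤ f γ.length := by
    have hgeod := α.le_add_dist_getVert_of_length_eq_dist hα (f γ.length) le_rfl
    have hfn := hf γ.length
    rw [getVert_length] at hgeod hfn
    omega
  obtain ⟨j, -, hjM, hMj⟩ := Nat.exists_near_of_succ_le_add f h0 hn hstep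
  refine ⟨γ.getVert j, γ.getVert_mem_support j, ?_⟩
  have htri := (hreach (f j) j).symm.dist_triangle_left (α.getVert M)
  have hfj := hf j
  rw [dist_comm] at hfj
  have hmid := α.dist_getVert_le_of_le_add (i := f j) (j := M) (t := B) (by omega) (by omega)
  omega

end SimpleGraph.Walk

open SimpleGraph

theorem stmt_1_general {V : Type*} (X : SimpleGraph V) (B : ℕ)
    (h : ∀ w w' : V, ∃ γ : X.Walk w w', ∀ v ∈ γ.support, ∀ p : X.Walk w w',
      ∃ u ∈ p.support, X.dist u v ≤ B) :
    ∀ (w w' : V) (α : X.Walk w w'), α.length = X.dist w w' →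
      ∀ p : X.Walk w w', ∃ u ∈ p.support,
        X.dist u (α.getVert (α.length / 2)) ≤ 3 * B + 1 := by
  classical
  intro w w' α hα p
  by_cases hsmall : α.length / 2 ≤ 3 * B
  · refine ⟨w, p.start_mem_support, ?_⟩
    simpa using (α.dist_getVert_le_sub (Nat.zero_le (α.length / 2))).trans (by omega)
  obtain ⟨γ, hγ⟩ := h w w'
  obtain ⟨x, hx, hxM⟩ := α.exists_mem_support_dist_getVert_le_two_mul hα
    (fun x hx => hγ x hx α) (M := α.length / 2) (by omega) (by omega)
  obtain ⟨u, hu, hux⟩ := hγ x hx p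
  have htri := ((p.takeUntil u hu).reachable.symm.trans (γ.takeUntil x hx).reachable)
    |>.dist_triangle_left (α.getVert (α.length / 2))
  exact ⟨u, hu, by omega⟩

theorem stmt_1 {V : Type*} (X : SimpleGraph V) (hconn : X.Connected) (B : ℕ) (hB : 0 < B)
    (h : ∀ w w' : V, ∃ γ : X.Walk w w', ∀ v ∈ γ.support, ∀ p : X.Walk w w',
      ∃ u ∈ p.support, X.dist u v ≤ B) :
    ∀ (w w' : V) (α : X.Walk w w'), α.length = X.dist w w' →
      ∀ p : X.Walk w w', ∃ u ∈ p.support,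
        X.dist u (α.getVert (α.length / 2)) ≤ 3 * B + 1 :=
  stmt_1_general X B h
end

section
/- Let Z, S, 𝒦 be metric spaces and let K ≥ 2. Suppose μ : Z → S and ρ : Z → ℝ are maps such that μ × ρ : Z → S × ℝ (with the L¹ product metric) is a K-bi-Lipschitz bijection, and λ : Z → 𝒦 is a (K,K)-coarsely Lipschitz map whose restriction to each 'line' (μ × ρ)⁻¹({x} × ℝ), x ∈ S, is a (K,K)-quasi-isometry onto 𝒦 that is K-coarsely surjective. Then μ × λ : Z → S × 𝒦 (with the L¹ product metric) is a (K',K')-quasi-isometry with K'-coarsely dense image, where K' depends only on K. -/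
/-!
The upper bound is immediate from the Lipschitz bounds on `μ` and `lam`. For the lower bound,
given `z, z'` pick `w` with `μ w = μ z'` and `ρ w = ρ z`. Then `w` lies on the line of `z'`, so
`d(w, z')` is controlled by `d(lam w, lam z')`, while `d(z, w)` is controlled by `d(μ z, μ z')`
alone since `ρ z = ρ w`; the triangle inequality through `w` bounds `d(z, z')` affinely by
`d(μ z, μ z') + d(lam z, lam z')`. Coarse density follows from surjectivity of `μ` and the
coarse surjectivity of `lam` on each line.
-/

section LineFibration

variable {Z S 𝒦 : Type*} {μ : Z → S} {ρ : Z → ℝ} {lam : Z → 𝒦} {K : ℝ}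

theorem exists_dist_add_dist_le [PseudoMetricSpace S] [PseudoMetricSpace 𝒦]
    (hμ : Function.Surjective μ)
    (hfiber : ∀ (z : Z) (k : 𝒦), ∃ z' : Z, μ z' = μ z ∧ dist (lam z') k ≤ K) (x : S) (k : 𝒦) :
    ∃ z : Z, dist (μ z) x + dist (lam z) k ≤ K := by
  obtain ⟨z₀, rfl⟩ := hμ x
  obtain ⟨z, hzμ, hzk⟩ := hfiber z₀ k
  exact ⟨z, by rwa [hzμ, dist_self, zero_add]⟩

theorem dist_add_dist_le_of_lipschitz [PseudoMetricSpace Z] [PseudoMetricSpace S]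
    [PseudoMetricSpace 𝒦]
    (hμρ : ∀ z z', dist (μ z) (μ z') + |ρ z - ρ z'| ≤ K * dist z z')
    (hlam : ∀ z z', dist (lam z) (lam z') ≤ K * dist z z' + K) (z z' : Z) :
    dist (μ z) (μ z') + dist (lam z) (lam z') ≤ 2 * K * dist z z' + K := by
  linarith [hμρ z z', hlam z z', abs_nonneg (ρ z - ρ z')]

theorem dist_le_of_snd_eq [PseudoMetricSpace Z] [PseudoMetricSpace S] (hK : 0 < K)
    (hμρ : ∀ z z', 1 / K * dist z z' ≤ dist (μ z) (μ z') + |ρ z - ρ z'|)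
    {z w : Z} (h : ρ z = ρ w) : dist z w ≤ K * dist (μ z) (μ w) := by
  have := hμρ z w
  rwa [h, sub_self, abs_zero, add_zero, one_div, inv_mul_le_iff₀ hK] at this

theorem dist_le_of_fst_eq [PseudoMetricSpace Z] [PseudoMetricSpace 𝒦] (hK : 0 < K)
    (hline : ∀ z z', μ z = μ z' → 1 / K * dist z z' - K ≤ dist (lam z) (lam z'))
    {z z' : Z} (h : μ z = μ z') : dist z z' ≤ K * dist (lam z) (lam z') + K ^ 2 := by
  have := hline z z' h
  rw [sub_le_iff_le_add, one_div, inv_mul_le_iff₀ hK] at this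
  linarith

theorem dist_le_of_surjective_prod [PseudoMetricSpace Z] [PseudoMetricSpace S]
    [PseudoMetricSpace 𝒦] (hK : 0 < K)
    (hsurj : Function.Surjective fun z => (μ z, ρ z))
    (hμρ : ∀ z z', 1 / K * dist z z' ≤ dist (μ z) (μ z') + |ρ z - ρ z'|)
    (hlam : ∀ z z', dist (lam z) (lam z') ≤ K * dist z z' + K)
    (hline : ∀ z z', μ z = μ z' → 1 / K * dist z z' - K ≤ dist (lam z) (lam z'))
    (z z' : Z) :
    dist z z' ≤ (K + K ^ 3) * dist (μ z) (μ z') + K * dist (lam z) (lam z') + 2 * K ^ 2 := by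
  obtain ⟨w, hw⟩ := hsurj (μ z', ρ z)
  obtain ⟨hwμ, hwρ⟩ := Prod.mk.inj hw
  have hzw : dist z w ≤ K * dist (μ z) (μ z') := hwμ ▸ dist_le_of_snd_eq hK hμρ hwρ.symm
  have hwz' := dist_le_of_fst_eq hK hline hwμ
  have hlam_w : dist (lam w) (lam z') ≤ K * dist z w + K + dist (lam z) (lam z') := by
    rw [dist_comm z w]
    linarith [dist_triangle (lam w) (lam z) (lam z'), hlam w z]
  calc dist z z' ≤ dist z w + dist w z' := dist_triangle z w z'
    _ ≤ dist z w + (K * (K * dist z w + K + dist (lam z) (lam z')) + K ^ 2) := by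
        gcongr
        exact hwz'.trans (by gcongr)
    _ = (1 + K ^ 2) * dist z w + K * dist (lam z) (lam z') + 2 * K ^ 2 := by ring
    _ ≤ (1 + K ^ 2) * (K * dist (μ z) (μ z')) + K * dist (lam z) (lam z') + 2 * K ^ 2 := by
        gcongr
    _ = (K + K ^ 3) * dist (μ z) (μ z') + K * dist (lam z) (lam z') + 2 * K ^ 2 := by ring

end LineFibration

theorem one_div_mul_sub_le_of_le {C a b : ℝ} (hC : 0 < C) (h : a ≤ C * b + C ^ 2) :
    1 / C * a - C ≤ b := by
  rw [sub_le_iff_le_add, one_div, inv_mul_le_iff₀ hC]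
  linarith

theorem stmt_11 :
    ∀ K : ℝ, 2 ≤ K →
    ∃ K' : ℝ, 0 < K' ∧
      ∀ (Z S 𝒦 : Type) [iZ : MetricSpace Z] [iS : MetricSpace S] [iK : MetricSpace 𝒦],
        ∀ (μ : Z → S) (ρ : Z → ℝ) (lam : Z → 𝒦),
          Function.Bijective (fun z : Z => (μ z, ρ z)) →
          (∀ z z' : Z, (1 / K) * dist z z' ≤ dist (μ z) (μ z') + |ρ z - ρ z'| ∧
            dist (μ z) (μ z') + |ρ z - ρ z'| ≤ K * dist z z') →
          (∀ z z' : Z, dist (lam z) (lam z') ≤ K * dist z z' + K) →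
          (∀ z z' : Z, μ z = μ z' → (1 / K) * dist z z' - K ≤ dist (lam z) (lam z')) →
          (∀ (z : Z) (k : 𝒦), ∃ z' : Z, μ z' = μ z ∧ dist (lam z') k ≤ K) →
          (∀ z z' : Z,
            (1 / K') * dist z z' - K' ≤ dist (μ z) (μ z') + dist (lam z) (lam z') ∧
            dist (μ z) (μ z') + dist (lam z) (lam z') ≤ K' * dist z z' + K') ∧
          (∀ (x : S) (k : 𝒦), ∃ z : Z, dist (μ z) x + dist (lam z) k ≤ K') := by
  intro K hK
  have hK0 : 0 < K := by linarith
  have hKK3 : K ≤ K ^ 3 := le_self_pow₀ (by linarith) (by norm_num)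
  refine ⟨2 * K ^ 3, by positivity, ?_⟩
  intro Z S 𝒦 _ _ _ μ ρ lam hbij hμρ hlam hline hfiber
  refine ⟨fun z z' => ⟨?_, ?_⟩, fun x k => ?_⟩
  · apply one_div_mul_sub_le_of_le (by positivity)
    have := dist_le_of_surjective_prod hK0 hbij.2 (fun z z' => (hμρ z z').1) hlam hline z z'
    have hK2 : 2 * K ^ 2 ≤ (2 * K ^ 3) ^ 2 := by nlinarith
    nlinarith [dist_nonneg (x := μ z) (y := μ z'), dist_nonneg (x := lam z) (y := lam z')]
  · have := dist_add_dist_le_of_lipschitz (fun z z' => (hμρ z z').2) hlam z z'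
    nlinarith [dist_nonneg (x := z) (y := z')]
  · obtain ⟨z, hz⟩ := exists_dist_add_dist_le (Prod.fst_surjective.comp hbij.2) hfiber x k
    exact ⟨z, hz.trans (by linarith)⟩
end
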